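/- arXiv:1510.07694 — 3 statements merged into one kernel-verified Lean document; each statement's English description precedes it below -/
import Mathlib

section
/- (Theorem 3.1, part) If τ > 0 and τ/h² < 1/2, then the matrices I + (τ/2)P and I + (τ/2)R are nonsingular and all of their entries are nonnegative. -/
open Matrix Kronecker
open scoped Matrix.Norms.L2Operator

/-- The `N × N` symmetric tridiagonal matrix with main-diagonal entries `-2/h²` and
sub- and superdiagonal entries `1/h²`. -/
noncomputable def tridT (N : ℕ) (h : ℝ) : Matrix (Fin N) (Fin N) ℝ :=
  Matrix.of fun i j =>
    if i = j then -2 / h ^ 2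
    else if (i : ℕ) + 1 = (j : ℕ) ∨ (j : ℕ) + 1 = (i : ℕ) then 1 / h ^ 2
    else 0

/-- `P = I_N ⊗ T`, an `N² × N²` matrix. -/
noncomputable def Pmat (N : ℕ) (h : ℝ) : Matrix (Fin N × Fin N) (Fin N × Fin N) ℝ :=
  (1 : Matrix (Fin N) (Fin N) ℝ) ⊗ₖ tridT N h

/-- `R = T ⊗ I_N`, an `N² × N²` matrix. -/
noncomputable def Rmat (N : ℕ) (h : ℝ) : Matrix (Fin N × Fin N) (Fin N × Fin N) ℝ :=
  tridT N h ⊗ₖ (1 : Matrix (Fin N) (Fin N) ℝ)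

lemma tridT_diag (N : ℕ) (h : ℝ) (b : Fin N) : tridT N h b b = -2 / h ^ 2 := by
  simp [tridT]

lemma tridT_off_nonneg (N : ℕ) (h : ℝ) {b d : Fin N} (hbd : b ≠ d) : 0 ≤ tridT N h b d := by
  simp only [tridT, Matrix.of_apply, if_neg hbd]
  split_ifs <;> positivity

lemma sum_erase_tridT (N : ℕ) (h : ℝ) (hh : 0 < h) (b : Fin N) :
    ∑ d ∈ Finset.univ.erase b, ‖tridT N h b d‖ ≤ 2 / h ^ 2 := by
  have h2 : (0:ℝ) < h ^ 2 := by positivity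
  have hterm : ∀ d ∈ Finset.univ.erase b,
      ‖tridT N h b d‖ = if (b:ℕ) + 1 = (d:ℕ) ∨ (d:ℕ) + 1 = (b:ℕ) then 1 / h ^ 2 else 0 := by
    intro d hd
    have hbd : b ≠ d := (Finset.ne_of_mem_erase hd).symm
    simp only [tridT, Matrix.of_apply, if_neg hbd]
    split_ifs
    · exact Real.norm_of_nonneg (by positivity)
    · simp
  rw [Finset.sum_congr rfl hterm]
  have hle : ∑ d ∈ Finset.univ.erase b,
      (if (b:ℕ) + 1 = (d:ℕ) ∨ (d:ℕ) + 1 = (b:ℕ) then 1 / h ^ 2 else 0 : ℝ)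
      ≤ ∑ d : Fin N, (if (b:ℕ) + 1 = (d:ℕ) ∨ (d:ℕ) + 1 = (b:ℕ) then 1 / h ^ 2 else 0 : ℝ) := by
    apply Finset.sum_le_sum_of_subset_of_nonneg (Finset.erase_subset _ _)
    intro i _ _
    split_ifs <;> positivity
  refine hle.trans ?_
  rw [Finset.sum_ite, Finset.sum_const_zero, add_zero, Finset.sum_const, nsmul_eq_mul]
  have hcard : (Finset.univ.filter
      (fun d : Fin N => (b:ℕ) + 1 = (d:ℕ) ∨ (d:ℕ) + 1 = (b:ℕ))).card ≤ 2 := by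
    have : (Finset.univ.filter
        (fun d : Fin N => (b:ℕ) + 1 = (d:ℕ) ∨ (d:ℕ) + 1 = (b:ℕ))).card
        ≤ ({(b:ℕ) + 1, (b:ℕ) - 1} : Finset ℕ).card := by
      refine Finset.card_le_card_of_injOn (fun d : Fin N => (d:ℕ)) ?_ ?_
      · intro d hd
        simp only [Finset.mem_coe, Finset.mem_filter, Finset.mem_univ, true_and] at hd
        simp only [Finset.mem_coe, Finset.mem_insert, Finset.mem_singleton]
        rcases hd with h1 | h1
        · exact Or.inl h1.symm
        · exact Or.inr (by omega)
      · exact fun x _ y _ hxy => Fin.val_injective hxy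
    refine this.trans ?_
    exact (Finset.card_insert_le _ _).trans (by simp)
  calc ((Finset.univ.filter
      (fun d : Fin N => (b:ℕ) + 1 = (d:ℕ) ∨ (d:ℕ) + 1 = (b:ℕ))).card : ℝ) * (1 / h ^ 2)
      ≤ 2 * (1 / h ^ 2) := by
        apply mul_le_mul_of_nonneg_right _ (by positivity)
        exact_mod_cast hcard
    _ = 2 / h ^ 2 := by ring

lemma aux_main {n : Type*} [Fintype n] [DecidableEq n]
    (M : Matrix n n ℝ) (h τ : ℝ) (hh : 0 < h) (hτ0 : 0 < τ) (hτ : τ / h ^ 2 < 1 / 2)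
    (hdiag : ∀ k, M k k = -2 / h ^ 2)
    (hoff : ∀ i j, i ≠ j → 0 ≤ M i j)
    (hsum : ∀ k, ∑ j ∈ Finset.univ.erase k, ‖M k j‖ ≤ 2 / h ^ 2) :
    IsUnit (1 + (τ / 2) • M) ∧ ∀ i j, 0 ≤ (1 + (τ / 2) • M) i j := by
  have h2 : (0:ℝ) < h ^ 2 := by positivity
  have hdiagval : ∀ k, (1 + (τ / 2) • M) k k = 1 - τ / h ^ 2 := by
    intro k
    simp only [Matrix.add_apply, Matrix.smul_apply, Matrix.one_apply_eq, hdiag k, smul_eq_mul]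
    field_simp
    ring
  have hdpos : (0:ℝ) < 1 - τ / h ^ 2 := by linarith
  constructor
  · rw [Matrix.isUnit_iff_isUnit_det, isUnit_iff_ne_zero]
    apply det_ne_zero_of_sum_row_lt_diag
    intro k
    have : ∑ j ∈ Finset.univ.erase k, ‖(1 + (τ / 2) • M) k j‖
        = (τ / 2) * ∑ j ∈ Finset.univ.erase k, ‖M k j‖ := by
      rw [Finset.mul_sum]
      apply Finset.sum_congr rfl
      intro j hj
      have hjk : k ≠ j := (Finset.ne_of_mem_erase hj).symm
      simp only [Matrix.add_apply, Matrix.smul_apply, Matrix.one_apply_ne hjk, zero_add,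
        smul_eq_mul, norm_mul]
      rw [Real.norm_of_nonneg (by positivity : (0:ℝ) ≤ τ / 2)]
    rw [this, hdiagval k, Real.norm_of_nonneg hdpos.le]
    have h1 : (τ / 2) * ∑ j ∈ Finset.univ.erase k, ‖M k j‖ ≤ (τ / 2) * (2 / h ^ 2) := by
      apply mul_le_mul_of_nonneg_left (hsum k) (by positivity)
    have h3 : (τ / 2) * (2 / h ^ 2) = τ / h ^ 2 := by ring
    linarith
  · intro i j
    by_cases hij : i = j
    · subst hij
      rw [hdiagval i]
      linarith
    · simp only [Matrix.add_apply, Matrix.smul_apply, Matrix.one_apply_ne hij, zero_add,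
        smul_eq_mul]
      have := hoff i j hij
      positivity

/-- (Theorem 3.1, part) If `τ > 0` and `τ/h² < 1/2`, then `I + (τ/2)P` and `I + (τ/2)R`
are nonsingular and entrywise nonnegative. -/
theorem stmt3 (N : ℕ) (hN : 1 ≤ N) (h : ℝ) (hh : h = 1 / (N + 1))
    (τ : ℝ) (hτ0 : 0 < τ) (hτ : τ / h ^ 2 < 1 / 2) :
    IsUnit (1 + (τ / 2) • Pmat N h) ∧
      (∀ i j, 0 ≤ (1 + (τ / 2) • Pmat N h) i j) ∧
    IsUnit (1 + (τ / 2) • Rmat N h) ∧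
      (∀ i j, 0 ≤ (1 + (τ / 2) • Rmat N h) i j) := by
  have hh0 : (0:ℝ) < h := by
    rw [hh]; positivity
  have hP := aux_main (Pmat N h) h τ hh0 hτ0 hτ ?_ ?_ ?_
  rotate_left
  · rintro ⟨a, b⟩
    simp [Pmat, Matrix.kroneckerMap_apply, tridT_diag]
  · rintro ⟨a, b⟩ ⟨c, d⟩ hij
    simp only [Pmat, Matrix.kroneckerMap_apply]
    by_cases hac : a = c
    · subst hac
      have hbd : b ≠ d := fun hbd => hij (by rw [hbd])
      rw [Matrix.one_apply_eq, one_mul]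
      exact tridT_off_nonneg N h hbd
    · rw [Matrix.one_apply_ne hac, zero_mul]
  · rintro ⟨a, b⟩
    have key : ∑ j ∈ Finset.univ.erase (a, b), ‖Pmat N h (a, b) j‖
        = ∑ d ∈ Finset.univ.erase b, ‖tridT N h b d‖ := by
      rw [Finset.sum_erase_eq_sub (Finset.mem_univ _),
        Finset.sum_erase_eq_sub (Finset.mem_univ _)]
      have h1 : ∑ j : Fin N × Fin N, ‖Pmat N h (a, b) j‖ = ∑ d : Fin N, ‖tridT N h b d‖ := by
        rw [Fintype.sum_prod_type]
        simp only [Pmat, Matrix.kroneckerMap_apply, norm_mul]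
        rw [Finset.sum_comm]
        apply Finset.sum_congr rfl
        intro d _
        rw [← Finset.sum_mul]
        have hone : ∑ c : Fin N, ‖(1 : Matrix (Fin N) (Fin N) ℝ) a c‖ = 1 := by
          simp [Matrix.one_apply, apply_ite (norm : ℝ → ℝ)]
        rw [hone, one_mul]
      have h2 : ‖Pmat N h (a, b) (a, b)‖ = ‖tridT N h b b‖ := by
        simp [Pmat, Matrix.kroneckerMap_apply]
      rw [h1, h2]
    rw [key]
    exact sum_erase_tridT N h hh0 b
  have hR := aux_main (Rmat N h) h τ hh0 hτ0 hτ ?_ ?_ ?_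
  rotate_left
  · rintro ⟨a, b⟩
    simp [Rmat, Matrix.kroneckerMap_apply, tridT_diag]
  · rintro ⟨a, b⟩ ⟨c, d⟩ hij
    simp only [Rmat, Matrix.kroneckerMap_apply]
    by_cases hbd : b = d
    · subst hbd
      have hac : a ≠ c := fun hac => hij (by rw [hac])
      rw [Matrix.one_apply_eq, mul_one]
      exact tridT_off_nonneg N h hac
    · rw [Matrix.one_apply_ne hbd, mul_zero]
  · rintro ⟨a, b⟩
    have key : ∑ j ∈ Finset.univ.erase (a, b), ‖Rmat N h (a, b) j‖
        = ∑ c ∈ Finset.univ.erase a, ‖tridT N h a c‖ := by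
      rw [Finset.sum_erase_eq_sub (Finset.mem_univ _),
        Finset.sum_erase_eq_sub (Finset.mem_univ _)]
      have h1 : ∑ j : Fin N × Fin N, ‖Rmat N h (a, b) j‖ = ∑ c : Fin N, ‖tridT N h a c‖ := by
        rw [Fintype.sum_prod_type]
        simp only [Rmat, Matrix.kroneckerMap_apply, norm_mul]
        apply Finset.sum_congr rfl
        intro c _
        rw [← Finset.mul_sum]
        have hone : ∑ d : Fin N, ‖(1 : Matrix (Fin N) (Fin N) ℝ) b d‖ = 1 := by
          simp [Matrix.one_apply, apply_ite (norm : ℝ → ℝ)]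
        rw [hone, mul_one]
      have h2 : ‖Rmat N h (a, b) (a, b)‖ = ‖tridT N h a a‖ := by
        simp [Rmat, Matrix.kroneckerMap_apply]
      rw [h1, h2]
    rw [key]
    exact sum_erase_tridT N h hh0 a
  exact ⟨hP.1, hP.2, hR.1, hR.2⟩
end

section
/- (Corollary 3.1) Let v ∈ ℝ^{N²} have all entries nonnegative. If τ > 0 and τ/h² < 1/(4·max{1, max_{i=1,…,N²} v_i}), then the matrices I + τ·P·D(v) and I + τ·R·D(v) are nonsingular with all entries nonnegative, and the matrices I - τ·P·D(v) and I - τ·R·D(v) are nonsingular and inverse positive, i.e. every entry of their inverses is nonnegative. -/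
open Matrix Kronecker
open scoped Matrix.Norms.L2Operator

section aux

set_option linter.unusedSectionVars false

variable {n : Type*} [Fintype n] [DecidableEq n] [Nonempty n]

/-- Entries of powers of an entrywise-nonnegative matrix are nonnegative. -/
lemma stmt7_matpow_entries_nonneg (E : Matrix n n ℝ) (hE : ∀ i j, 0 ≤ E i j) :
    ∀ k i j, 0 ≤ (E ^ k) i j := by
  intro k
  induction k with
  | zero =>
    intro i j
    simp only [pow_zero, Matrix.one_apply]
    split <;> norm_num
  | succ k ih =>
    intro i j
    rw [pow_succ, Matrix.mul_apply]
    exact Finset.sum_nonneg fun l _ => mul_nonneg (ih i l) (hE l j)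

/-- Core analytic lemma: if the absolute row sums of `C` are bounded by `r < 1` and
`1 + C` is entrywise nonnegative, then `1 + C` and `1 - C` are units and `(1 - C)⁻¹`
is entrywise nonnegative (via a geometric/Neumann series argument in the `ℓ∞`
operator norm). -/
lemma stmt7_core_lemma (C : Matrix n n ℝ) (r : ℝ) (hr : r < 1)
    (hpos : ∀ i j, 0 ≤ (1 + C) i j)
    (hrow : ∀ i, ∑ j, |C i j| ≤ r) :
    IsUnit (1 + C) ∧ IsUnit (1 - C) ∧ ∀ i j, 0 ≤ (1 - C)⁻¹ i j := by
  letI := Matrix.linftyOpNormedAddCommGroup (m := n) (n := n) (α := ℝ)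
  letI := Matrix.linftyOpNormedRing (n := n) (α := ℝ)
  letI := Matrix.linftyOpNormedAlgebra (R := ℝ) (n := n) (α := ℝ)
  haveI : CompleteSpace (Matrix n n ℝ) := FiniteDimensional.complete ℝ _
  have h0r : 0 ≤ r :=
    le_trans (Finset.sum_nonneg fun j _ => abs_nonneg _) (hrow (Classical.arbitrary n))
  have hnorm : ∀ (A : Matrix n n ℝ) (s : ℝ), 0 ≤ s → (∀ i, ∑ j, |A i j| ≤ s) → ‖A‖ ≤ s := by
    intro A s h0s hA
    rw [Matrix.linfty_opNorm_def, ← Real.coe_toNNReal s h0s, NNReal.coe_le_coe]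
    apply Finset.sup_le
    intro i _
    rw [← NNReal.coe_le_coe, Real.coe_toNNReal _ h0s, NNReal.coe_sum]
    simpa [Real.norm_eq_abs] using hA i
  have hC : ‖C‖ < 1 := lt_of_le_of_lt (hnorm C r h0r hrow) hr
  have hU2 : IsUnit (1 - C) := isUnit_one_sub_of_norm_lt_one hC
  have hU1 : IsUnit (1 + C) := by
    have hC' : ‖-C‖ < 1 := by rwa [norm_neg]
    simpa [sub_neg_eq_add] using isUnit_one_sub_of_norm_lt_one hC'
  refine ⟨hU1, hU2, ?_⟩
  set E : Matrix n n ℝ := ((2:ℝ)⁻¹) • (1 + C) with hEdef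
  have hEpos : ∀ i j, 0 ≤ E i j := by
    intro i j
    have h1 : E i j = 2⁻¹ * (1 + C) i j := rfl
    rw [h1]
    exact mul_nonneg (by norm_num) (hpos i j)
  have hErow : ∀ i, ∑ j, |E i j| ≤ 2⁻¹ * (1 + r) := by
    intro i
    have hbd : ∀ j, |E i j| ≤ 2⁻¹ * ((if i = j then (1:ℝ) else 0) + |C i j|) := by
      intro j
      have h1 : E i j = 2⁻¹ * ((if i = j then (1:ℝ) else 0) + C i j) := by
        simp only [hEdef, Matrix.smul_apply, Matrix.add_apply, Matrix.one_apply, smul_eq_mul]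
        all_goals split <;> ring
      rw [h1, abs_mul, abs_of_nonneg (by norm_num : (0:ℝ) ≤ 2⁻¹)]
      refine mul_le_mul_of_nonneg_left ?_ (by norm_num)
      refine (abs_add_le _ _).trans ?_
      gcongr
      split <;> simp
    calc ∑ j, |E i j| ≤ ∑ j, 2⁻¹ * ((if i = j then (1:ℝ) else 0) + |C i j|) :=
          Finset.sum_le_sum fun j _ => hbd j
      _ = 2⁻¹ * ((∑ j, if i = j then (1:ℝ) else 0) + ∑ j, |C i j|) := by
          rw [← Finset.mul_sum, Finset.sum_add_distrib]
      _ ≤ 2⁻¹ * (1 + r) := by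
          have h1 : (∑ j, if i = j then (1:ℝ) else 0) = 1 := by simp
          rw [h1]
          gcongr
          exact hrow i
  have hE : ‖E‖ < 1 :=
    lt_of_le_of_lt (hnorm E _ (by positivity) hErow) (by linarith)
  set S : Matrix n n ℝ := ∑' k : ℕ, E ^ k with hSdef
  have hmul : (1 - E) * S = 1 := mul_neg_geom_series E hE
  have h2 : (1 : Matrix n n ℝ) - C = (2:ℝ) • (1 - E) := by
    rw [hEdef]
    module
  have hmul2 : ((1 : Matrix n n ℝ) - C) * ((2:ℝ)⁻¹ • S) = 1 := by
    rw [h2, Matrix.smul_mul, Matrix.mul_smul, smul_smul]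
    norm_num [hmul]
  have hinv : ((1 : Matrix n n ℝ) - C)⁻¹ = (2:ℝ)⁻¹ • S := Matrix.inv_eq_right_inv hmul2
  intro i j
  rw [hinv]
  have hS : HasSum (fun k : ℕ => E ^ k) S := (summable_geometric_of_norm_lt_one hE).hasSum
  let L : Matrix n n ℝ →ₗ[ℝ] ℝ :=
    { toFun := fun A => A i j
      map_add' := fun A B => rfl
      map_smul' := fun c A => rfl }
  have hLc : Continuous L := LinearMap.continuous_of_finiteDimensional L
  have hLS : HasSum (fun k : ℕ => L (E ^ k)) (L S) := hS.map L hLc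
  have h0 : (0:ℝ) ≤ L S :=
    hasSum_le (fun k => stmt7_matpow_entries_nonneg E hEpos k i j) hasSum_zero hLS
  have hsmul : ((2:ℝ)⁻¹ • S) i j = 2⁻¹ * S i j := rfl
  rw [hsmul]
  exact mul_nonneg (by norm_num) h0

/-- A sum of an indicator-like function over a property satisfied by at most one
element is at most the indicated value. -/
lemma stmt7_sum_ite_le {m : Type*} [Fintype m] [DecidableEq m] (p : m → Prop)
    [DecidablePred p] (hp : ∀ a b, p a → p b → a = b) {c : ℝ} (hc : 0 ≤ c) :
    ∑ j, (if p j then c else 0) ≤ c := by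
  by_cases hex : ∃ a, p a
  · obtain ⟨a, ha⟩ := hex
    have heq : ∀ j, (if p j then c else 0) = if j = a then c else 0 := by
      intro j
      by_cases hj : p j
      · simp [hj, hp j a hj ha, ha]
      · have hne : j ≠ a := fun e => hj (e ▸ ha)
        simp [hj, hne]
    rw [Finset.sum_congr rfl fun j _ => heq j]
    simp
  · push_neg at hex
    simp [hex, hc]

/-- Absolute row sums of `tridT` are at most `4/h²`. -/
lemma stmt7_rowT {N : ℕ} {h : ℝ} (hh2 : 0 < h ^ 2) (i : Fin N) :
    ∑ j, |tridT N h i j| ≤ 4 / h ^ 2 := by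
  classical
  have hsplit : ∑ j, |tridT N h i j| =
      |tridT N h i i| + ∑ j ∈ Finset.univ.erase i, |tridT N h i j| :=
    (Finset.add_sum_erase _ _ (Finset.mem_univ i)).symm
  have hdiag : |tridT N h i i| = 2 / h ^ 2 := by
    have hd : tridT N h i i = -2 / h ^ 2 := by simp [tridT]
    rw [hd, neg_div, abs_neg, abs_of_nonneg (by positivity)]
  set g : Fin N → ℝ := fun j =>
    (if (i : ℕ) + 1 = (j : ℕ) then 1 / h ^ 2 else 0) +
    (if (j : ℕ) + 1 = (i : ℕ) then 1 / h ^ 2 else 0) with hg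
  have hgnonneg : ∀ j, 0 ≤ g j := by
    intro j
    apply add_nonneg <;> (split <;> positivity)
  have hTg : ∀ j ∈ Finset.univ.erase i, |tridT N h i j| ≤ g j := by
    intro j hj
    have hji : j ≠ i := Finset.ne_of_mem_erase hj
    have hij : i ≠ j := hji.symm
    have hT : tridT N h i j =
        if (i : ℕ) + 1 = (j : ℕ) ∨ (j : ℕ) + 1 = (i : ℕ) then 1 / h ^ 2 else 0 := by
      simp [tridT, hij]
    rw [hT]
    by_cases hadj : (i : ℕ) + 1 = (j : ℕ) ∨ (j : ℕ) + 1 = (i : ℕ)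
    · rw [if_pos hadj, abs_of_nonneg (by positivity)]
      rcases hadj with h1 | h1
      · have h2 : (j : ℕ) + 1 ≠ (i : ℕ) := by omega
        simp [hg, h1, h2]
      · have h2 : (i : ℕ) + 1 ≠ (j : ℕ) := by omega
        simp [hg, h1, h2]
    · rw [if_neg hadj]
      simpa using hgnonneg j
  have h2 : ∑ j ∈ Finset.univ.erase i, |tridT N h i j| ≤ ∑ j, g j := by
    refine le_trans (Finset.sum_le_sum hTg) ?_
    exact Finset.sum_le_sum_of_subset_of_nonneg (Finset.subset_univ _)
      fun j _ _ => hgnonneg j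
  have h3 : ∑ j, g j ≤ 1 / h ^ 2 + 1 / h ^ 2 := by
    rw [hg, Finset.sum_add_distrib]
    have ha := stmt7_sum_ite_le (fun j : Fin N => (i : ℕ) + 1 = (j : ℕ))
      (fun a b h1 h2 => Fin.ext (by omega)) (by positivity : (0:ℝ) ≤ 1 / h ^ 2)
    have hb := stmt7_sum_ite_le (fun j : Fin N => (j : ℕ) + 1 = (i : ℕ))
      (fun a b h1 h2 => Fin.ext (by omega)) (by positivity : (0:ℝ) ≤ 1 / h ^ 2)
    exact add_le_add ha hb
  rw [hsplit, hdiag]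
  have h4 : 2 / h ^ 2 + (1 / h ^ 2 + 1 / h ^ 2) = 4 / h ^ 2 := by ring
  linarith

/-- Absolute row sums of `Pmat` are at most `4/h²`. -/
lemma stmt7_rowP {N : ℕ} {h : ℝ} (hh2 : 0 < h ^ 2) (i : Fin N × Fin N) :
    ∑ j, |Pmat N h i j| ≤ 4 / h ^ 2 := by
  obtain ⟨i1, i2⟩ := i
  rw [Fintype.sum_prod_type]
  have hentry : ∀ j1 j2, |Pmat N h (i1, i2) (j1, j2)| =
      if i1 = j1 then |tridT N h i2 j2| else 0 := by
    intro j1 j2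
    simp only [Pmat, kroneckerMap_apply, Matrix.one_apply]
    split <;> simp
  calc ∑ j1, ∑ j2, |Pmat N h (i1, i2) (j1, j2)|
      = ∑ j1, (if i1 = j1 then ∑ j2, |tridT N h i2 j2| else 0) := by
        refine Finset.sum_congr rfl fun j1 _ => ?_
        rw [Finset.sum_congr rfl fun j2 _ => hentry j1 j2]
        split <;> simp
    _ = ∑ j2, |tridT N h i2 j2| := by
        rw [Finset.sum_ite_eq]
        simp
    _ ≤ 4 / h ^ 2 := stmt7_rowT hh2 i2

/-- Absolute row sums of `Rmat` are at most `4/h²`. -/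
lemma stmt7_rowR {N : ℕ} {h : ℝ} (hh2 : 0 < h ^ 2) (i : Fin N × Fin N) :
    ∑ j, |Rmat N h i j| ≤ 4 / h ^ 2 := by
  obtain ⟨i1, i2⟩ := i
  rw [Fintype.sum_prod_type]
  have hentry : ∀ j1 j2, |Rmat N h (i1, i2) (j1, j2)| =
      if i2 = j2 then |tridT N h i1 j1| else 0 := by
    intro j1 j2
    simp only [Rmat, kroneckerMap_apply, Matrix.one_apply]
    split <;> simp [mul_comm]
  calc ∑ j1, ∑ j2, |Rmat N h (i1, i2) (j1, j2)|
      = ∑ j1, |tridT N h i1 j1| := by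
        refine Finset.sum_congr rfl fun j1 _ => ?_
        rw [Finset.sum_congr rfl fun j2 _ => hentry j1 j2, Finset.sum_ite_eq]
        simp
    _ ≤ 4 / h ^ 2 := stmt7_rowT hh2 i1

lemma stmt7_diagP {N : ℕ} {h : ℝ} (i : Fin N × Fin N) : Pmat N h i i = -2 / h ^ 2 := by
  obtain ⟨i1, i2⟩ := i
  simp [Pmat, tridT, Matrix.one_apply]

lemma stmt7_diagR {N : ℕ} {h : ℝ} (i : Fin N × Fin N) : Rmat N h i i = -2 / h ^ 2 := by
  obtain ⟨i1, i2⟩ := i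
  simp [Rmat, tridT, Matrix.one_apply]

lemma stmt7_offP {N : ℕ} {h : ℝ} (hh2 : 0 < h ^ 2) (i j : Fin N × Fin N) (hij : i ≠ j) :
    0 ≤ Pmat N h i j := by
  obtain ⟨i1, i2⟩ := i; obtain ⟨j1, j2⟩ := j
  simp only [Pmat, kroneckerMap_apply, Matrix.one_apply]
  by_cases h1 : i1 = j1
  · have h2 : i2 ≠ j2 := by rintro rfl; exact hij (by rw [h1])
    simp only [h1, if_pos rfl, one_mul, tridT, Matrix.of_apply, if_neg h2]
    split <;> positivity
  · simp [h1]

lemma stmt7_offR {N : ℕ} {h : ℝ} (hh2 : 0 < h ^ 2) (i j : Fin N × Fin N) (hij : i ≠ j) :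
    0 ≤ Rmat N h i j := by
  obtain ⟨i1, i2⟩ := i; obtain ⟨j1, j2⟩ := j
  simp only [Rmat, kroneckerMap_apply, Matrix.one_apply]
  by_cases h2 : i2 = j2
  · have h1 : i1 ≠ j1 := by rintro rfl; exact hij (by rw [h2])
    simp only [h2, if_pos rfl, mul_one, tridT, Matrix.of_apply, if_neg h1]
    split <;> positivity
  · simp [h2]

/-- Assembly lemma: if `A` has diagonal `-2/h²`, nonnegative off-diagonal entries
and absolute row sums at most `4/h²`, then the four conclusions hold for
`C = τ • (A * D(v))`. -/
lemma stmt7_assemble (h : ℝ) (hh2 : 0 < h ^ 2)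
    (v : n → ℝ) (hv : ∀ i, 0 ≤ v i)
    (M : ℝ) (hM1 : 1 ≤ M) (hvM : ∀ i, v i ≤ M)
    (τ : ℝ) (hτ0 : 0 < τ) (hkey : τ * M * (4 / h ^ 2) < 1)
    (A : Matrix n n ℝ)
    (hrowA : ∀ i, ∑ j, |A i j| ≤ 4 / h ^ 2)
    (hdiagA : ∀ i, A i i = -2 / h ^ 2)
    (hoffA : ∀ i j, i ≠ j → 0 ≤ A i j) :
    IsUnit (1 + τ • (A * Matrix.diagonal v)) ∧
      (∀ i j, 0 ≤ (1 + τ • (A * Matrix.diagonal v)) i j) ∧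
    IsUnit (1 - τ • (A * Matrix.diagonal v)) ∧
      (∀ i j, 0 ≤ (1 - τ • (A * Matrix.diagonal v))⁻¹ i j) := by
  have hM0 : 0 ≤ M := le_trans zero_le_one hM1
  set C : Matrix n n ℝ := τ • (A * Matrix.diagonal v) with hCdef
  have hCentry : ∀ i j, C i j = τ * (A i j * v j) := by
    intro i j
    simp [hCdef, Matrix.mul_diagonal]
  have hpos : ∀ i j, 0 ≤ (1 + C) i j := by
    intro i j
    rw [Matrix.add_apply, Matrix.one_apply, hCentry]
    by_cases hij : i = j
    · subst hij
      rw [if_pos rfl, hdiagA]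
      have base : 0 ≤ τ * M / h ^ 2 := by positivity
      have e1 : τ * (2 / h ^ 2) * v i ≤ τ * (2 / h ^ 2) * M :=
        mul_le_mul_of_nonneg_left (hvM i) (by positivity)
      have r1 : τ * (2 / h ^ 2) * M = 2 * (τ * M / h ^ 2) := by ring
      have r2 : τ * M * (4 / h ^ 2) = 4 * (τ * M / h ^ 2) := by ring
      have e2 : τ * (2 / h ^ 2) * M ≤ τ * M * (4 / h ^ 2) := by rw [r1, r2]; linarith
      have r3 : τ * (-2 / h ^ 2 * v i) = -(τ * (2 / h ^ 2) * v i) := by ring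
      linarith
    · rw [if_neg hij, zero_add]
      exact mul_nonneg hτ0.le (mul_nonneg (hoffA i j hij) (hv j))
  have hrowC : ∀ i, ∑ j, |C i j| ≤ τ * M * (4 / h ^ 2) := by
    intro i
    calc ∑ j, |C i j| = ∑ j, τ * M * |A i j| * (v j / M) := by
          refine Finset.sum_congr rfl fun j _ => ?_
          rw [hCentry, abs_mul, abs_mul, abs_of_nonneg hτ0.le, abs_of_nonneg (hv j)]
          field_simp
      _ ≤ ∑ j, τ * M * |A i j| * 1 := by
          refine Finset.sum_le_sum fun j _ => ?_
          refine mul_le_mul_of_nonneg_left ?_ (by positivity)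
          rw [div_le_one (by linarith : (0:ℝ) < M)]
          exact hvM j
      _ = τ * M * ∑ j, |A i j| := by
          rw [Finset.mul_sum]
          exact Finset.sum_congr rfl fun j _ => by ring
      _ ≤ τ * M * (4 / h ^ 2) :=
          mul_le_mul_of_nonneg_left (hrowA i) (mul_nonneg hτ0.le hM0)
  obtain ⟨u1, u2, hinv⟩ :=
    stmt7_core_lemma C (τ * M * (4 / h ^ 2)) hkey hpos hrowC
  exact ⟨u1, hpos, u2, hinv⟩

end aux

/-- (Corollary 3.1) If `v ≥ 0` entrywise, `τ > 0` and
`τ/h² < 1/(4·max{1, maxᵢ vᵢ})`, then `I + τ·P·D(v)` and `I + τ·R·D(v)` are nonsingular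
with nonnegative entries, and `I - τ·P·D(v)` and `I - τ·R·D(v)` are nonsingular and
inverse positive. -/
theorem stmt7 (N : ℕ) (hN : 1 ≤ N) (h : ℝ) (hh : h = 1 / (N + 1))
    (v : Fin N × Fin N → ℝ) (hv : ∀ i, 0 ≤ v i)
    (τ : ℝ) (hτ0 : 0 < τ) (hτ : τ / h ^ 2 < 1 / (4 * max 1 (⨆ i, v i))) :
    IsUnit (1 + τ • (Pmat N h * Matrix.diagonal v)) ∧
      (∀ i j, 0 ≤ (1 + τ • (Pmat N h * Matrix.diagonal v)) i j) ∧
    IsUnit (1 + τ • (Rmat N h * Matrix.diagonal v)) ∧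
      (∀ i j, 0 ≤ (1 + τ • (Rmat N h * Matrix.diagonal v)) i j) ∧
    IsUnit (1 - τ • (Pmat N h * Matrix.diagonal v)) ∧
      (∀ i j, 0 ≤ (1 - τ • (Pmat N h * Matrix.diagonal v))⁻¹ i j) ∧
    IsUnit (1 - τ • (Rmat N h * Matrix.diagonal v)) ∧
      (∀ i j, 0 ≤ (1 - τ • (Rmat N h * Matrix.diagonal v))⁻¹ i j) := by
  haveI : Nonempty (Fin N) := ⟨⟨0, hN⟩⟩
  have hh2 : 0 < h ^ 2 := by
    rw [hh]
    positivity
  set M : ℝ := max 1 (⨆ i, v i) with hM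
  have hM1 : (1:ℝ) ≤ M := le_max_left _ _
  have hvM : ∀ i, v i ≤ M := fun i =>
    le_trans (le_ciSup (Set.Finite.bddAbove (Set.finite_range v)) i) (le_max_right _ _)
  have h4M : (0:ℝ) < 4 * M := by nlinarith
  have h1 := (lt_div_iff₀ h4M).mp hτ
  have h2 : τ * M * (4 / h ^ 2) = τ / h ^ 2 * (4 * M) := by ring
  have hkey : τ * M * (4 / h ^ 2) < 1 := by rw [h2]; exact h1
  obtain ⟨uP, pP, uP', iP⟩ :=
    stmt7_assemble h hh2 v hv M hM1 hvM τ hτ0 hkey (Pmat N h)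
      (stmt7_rowP hh2) (stmt7_diagP) (stmt7_offP hh2)
  obtain ⟨uR, pR, uR', iR⟩ :=
    stmt7_assemble h hh2 v hv M hM1 hvM τ hτ0 hkey (Rmat N h)
      (stmt7_rowR hh2) (stmt7_diagR) (stmt7_offR hh2)
  exact ⟨uP, pP, uR, pR, uP', iP, uR', iR⟩
end

section
/- (Combination of Lemmas 3.2 and 3.3 used in Lemma 3.4) Let u_1, …, u_N be nonnegative reals with the convention u_0 = u_{N+1} = 0, and let X be the N×N real symmetric tridiagonal matrix with diagonal entries X_{ii} = -2u_i/h² and off-diagonal entries X_{i,i+1} = X_{i+1,i} = (u_i + u_{i+1})/(2h²). Then for every real s ≥ 0, the matrix exponential satisfies ‖exp(sX)‖ ≤ exp(s·L) in the spectral norm, where L = max_{1≤i≤N} (u_{i-1} - 2u_i + u_{i+1})/(2h²). -/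
open Matrix
open scoped Matrix.Norms.L2Operator

lemma diag_l2_norm_le {n : Type*} [Fintype n] [DecidableEq n] (v : n → ℝ) (c : ℝ)
    (hc : 0 ≤ c) (hv : ∀ i, |v i| ≤ c) : ‖Matrix.diagonal v‖ ≤ c := by
  rw [Matrix.l2_opNorm_def]
  refine ContinuousLinearMap.opNorm_le_bound _ hc fun x => ?_
  set T := (toEuclideanLin ≪≫ₗ LinearMap.toContinuousLinearMap) (Matrix.diagonal v) with hT
  have coord : ∀ i, (T x) i = v i * x i := by
    intro i
    show (Matrix.diagonal v *ᵥ (WithLp.equiv 2 (n → ℝ)) x) i = v i * x i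
    simp [Matrix.mulVec_diagonal]
  rw [EuclideanSpace.norm_eq, EuclideanSpace.norm_eq]
  have h1 : ∀ i, ‖(T x) i‖ ^ 2 ≤ c ^ 2 * ‖x i‖ ^ 2 := by
    intro i
    rw [coord i, Real.norm_eq_abs, Real.norm_eq_abs, abs_mul, mul_pow]
    exact mul_le_mul_of_nonneg_right (pow_le_pow_left₀ (abs_nonneg _) (hv i) 2)
      (sq_nonneg _) |>.trans_eq (by ring)
  calc √(∑ i, ‖(T x) i‖ ^ 2)
      ≤ √(∑ i, c ^ 2 * ‖x i‖ ^ 2) := Real.sqrt_le_sqrt (Finset.sum_le_sum fun i _ => h1 i)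
    _ = c * √(∑ i, ‖x i‖ ^ 2) := by
        rw [← Finset.mul_sum, Real.sqrt_mul (sq_nonneg c), Real.sqrt_sq hc]

/-- (Combination of Lemmas 3.2 and 3.3 used in Lemma 3.4) Let `u_1, …, u_N ≥ 0` with
`u_0 = u_{N+1} = 0`, and let `X` be the symmetric tridiagonal matrix with
`X_{ii} = -2u_i/h²` and `X_{i,i+1} = X_{i+1,i} = (u_i + u_{i+1})/(2h²)`. Then for every
`s ≥ 0`, `‖exp(sX)‖ ≤ exp(s·L)` in the spectral norm, where
`L = maxᵢ (u_{i-1} - 2u_i + u_{i+1})/(2h²)`. -/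
theorem stmt19 (N : ℕ) (hN : 1 ≤ N) (h : ℝ) (hh : h = 1 / (N + 1))
    (u : ℕ → ℝ) (hu : ∀ i, 1 ≤ i → i ≤ N → 0 ≤ u i)
    (hu0 : u 0 = 0) (huN : u (N + 1) = 0)
    (X : Matrix (Fin N) (Fin N) ℝ)
    (hX : X = Matrix.of fun i j : Fin N =>
      if i = j then -2 * u ((i : ℕ) + 1) / h ^ 2
      else if (i : ℕ) + 1 = (j : ℕ) ∨ (j : ℕ) + 1 = (i : ℕ) then
        (u ((i : ℕ) + 1) + u ((j : ℕ) + 1)) / (2 * h ^ 2)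
      else 0)
    (L : ℝ) (hL : L = ⨆ i : Fin N, (u (i : ℕ) - 2 * u ((i : ℕ) + 1) + u ((i : ℕ) + 2)) / (2 * h ^ 2))
    (s : ℝ) (hs : 0 ≤ s) :
    ‖NormedSpace.exp (s • X)‖ ≤ Real.exp (s * L) := by
  haveI : Nonempty (Fin N) := ⟨⟨0, hN⟩⟩
  have hhpos : 0 < h := by
    rw [hh]; positivity
  have hh2 : (0:ℝ) < 2 * h ^ 2 := by positivity
  -- nonnegativity of u on 0..N+1
  have hun : ∀ k : ℕ, k ≤ N + 1 → 0 ≤ u k := by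
    intro k hk
    rcases Nat.eq_zero_or_pos k with rfl | hk0
    · exact hu0.ge
    rcases eq_or_lt_of_le hk with rfl | hk'
    · exact huN.ge
    · exact hu k hk0 (Nat.lt_succ_iff.mp hk')
  -- symmetry
  have hXsymm : X.IsHermitian := by
    rw [hX]
    show _ᴴ = _
    ext i j
    simp only [conjTranspose_apply, of_apply, star_trivial]
    rcases eq_or_ne i j with rfl | hij
    · simp
    · simp only [if_neg hij, if_neg (Ne.symm hij)]
      split_ifs with h1 h2 <;> first | tauto | ring
  -- off-diagonal entries are nonneg
  have hoff : ∀ i j : Fin N, i ≠ j → 0 ≤ X i j := by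
    intro i j hij
    rw [hX]
    simp only [of_apply, if_neg hij]
    split
    · apply div_nonneg _ hh2.le
      have h1 : 0 ≤ u ((i:ℕ)+1) := hun _ (by omega)
      have h2 : 0 ≤ u ((j:ℕ)+1) := hun _ (by omega)
      linarith
    · exact le_refl _
  -- row sum bound
  have hbdd : BddAbove (Set.range fun i : Fin N =>
      (u (i : ℕ) - 2 * u ((i : ℕ) + 1) + u ((i : ℕ) + 2)) / (2 * h ^ 2)) :=
    Set.Finite.bddAbove (Set.finite_range _)
  have key : ∀ k : Fin N, X k k + ∑ j ∈ Finset.univ.erase k, |X k j| ≤ L := by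
    intro k
    have hLk : (u (k : ℕ) - 2 * u ((k : ℕ) + 1) + u ((k : ℕ) + 2)) / (2 * h ^ 2) ≤ L :=
      hL ▸ le_ciSup hbdd k
    set c1 : ℝ := (u (k : ℕ) + u ((k : ℕ) + 1)) / (2 * h ^ 2) with hc1def
    set c2 : ℝ := (u ((k : ℕ) + 1) + u ((k : ℕ) + 2)) / (2 * h ^ 2) with hc2def
    have hc1 : 0 ≤ c1 := by
      apply div_nonneg _ hh2.le
      have := hun (k : ℕ) (by omega); have := hun ((k : ℕ) + 1) (by omega); linarith
    have hc2 : 0 ≤ c2 := by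
      apply div_nonneg _ hh2.le
      have := hun ((k : ℕ) + 1) (by omega); have := hun ((k : ℕ) + 2) (by omega); linarith
    set g : Fin N → ℝ := fun j =>
      (if (j : ℕ) + 1 = (k : ℕ) then c1 else 0) + (if (k : ℕ) + 1 = (j : ℕ) then c2 else 0)
      with hg
    have habs : ∀ j ∈ Finset.univ.erase k, |X k j| = g j := by
      intro j hj
      have hjk : j ≠ k := Finset.ne_of_mem_erase hj
      have hkj : k ≠ j := hjk.symm
      rw [abs_of_nonneg (hoff k j hkj), hX]
      simp only [of_apply, if_neg hkj, hg]
      by_cases hc2' : (j : ℕ) + 1 = (k : ℕ)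
      · have hnc : ¬ (k : ℕ) + 1 = (j : ℕ) := by omega
        rw [if_pos (Or.inr hc2'), if_pos hc2', if_neg hnc, add_zero, hc1def, hc2']
        ring
      · by_cases hc1' : (k : ℕ) + 1 = (j : ℕ)
        · rw [if_pos (Or.inl hc1'), if_neg hc2', if_pos hc1', zero_add, hc2def, ← hc1']
        · rw [if_neg (by tauto), if_neg hc2', if_neg hc1', add_zero]
    have hsum : ∑ j ∈ Finset.univ.erase k, |X k j| ≤ c1 + c2 := by
      rw [Finset.sum_congr rfl habs]
      have hsub : ∑ j ∈ Finset.univ.erase k, g j ≤ ∑ j, g j := by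
        apply Finset.sum_le_sum_of_subset_of_nonneg (Finset.subset_univ _)
        intro j _ _
        have : (0:ℝ) ≤ (if (j : ℕ) + 1 = (k : ℕ) then c1 else 0) := by positivity
        have : (0:ℝ) ≤ (if (k : ℕ) + 1 = (j : ℕ) then c2 else 0) := by positivity
        simp only [hg]; positivity
      refine hsub.trans ?_
      rw [hg, Finset.sum_add_distrib]
      have h1 : ∑ j : Fin N, (if (j : ℕ) + 1 = (k : ℕ) then c1 else 0) ≤ c1 := by
        by_cases hk0 : (k : ℕ) = 0
        · rw [Finset.sum_eq_zero (fun j _ => if_neg (by omega))]; exact hc1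
        · set j0 : Fin N := ⟨(k : ℕ) - 1, by omega⟩ with hj0
          have hcond : ∀ j : Fin N, ((j : ℕ) + 1 = (k : ℕ)) ↔ (j = j0) := by
            intro j
            constructor
            · intro hj; apply Fin.ext; simp [hj0]; omega
            · intro hj; subst hj; simp [hj0]; omega
          refine le_of_eq ?_
          calc ∑ j : Fin N, (if (j : ℕ) + 1 = (k : ℕ) then c1 else 0)
              = ∑ j : Fin N, (if j = j0 then c1 else 0) := by
                refine Finset.sum_congr rfl fun j _ => ?_
                simp only [hcond j]
            _ = c1 := by rw [Finset.sum_ite_eq' Finset.univ j0 (fun _ => c1),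
                if_pos (Finset.mem_univ _)]
      have h2 : ∑ j : Fin N, (if (k : ℕ) + 1 = (j : ℕ) then c2 else 0) ≤ c2 := by
        by_cases hkN : (k : ℕ) + 1 < N
        · set j1 : Fin N := ⟨(k : ℕ) + 1, hkN⟩ with hj1
          have hcond : ∀ j : Fin N, ((k : ℕ) + 1 = (j : ℕ)) ↔ (j = j1) := by
            intro j
            constructor
            · intro hj; apply Fin.ext; simp [hj1]; omega
            · intro hj; subst hj; simp [hj1]
          refine le_of_eq ?_
          calc ∑ j : Fin N, (if (k : ℕ) + 1 = (j : ℕ) then c2 else 0)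
              = ∑ j : Fin N, (if j = j1 then c2 else 0) := by
                refine Finset.sum_congr rfl fun j _ => ?_
                simp only [hcond j]
            _ = c2 := by rw [Finset.sum_ite_eq' Finset.univ j1 (fun _ => c2),
                if_pos (Finset.mem_univ _)]
        · rw [Finset.sum_eq_zero (fun j _ => if_neg (by have := j.isLt; omega))]; exact hc2
      linarith
    have hdiag : X k k = -2 * u ((k : ℕ) + 1) / h ^ 2 := by rw [hX]; simp
    refine le_trans ?_ hLk
    have : X k k + ∑ j ∈ Finset.univ.erase k, |X k j| ≤ X k k + (c1 + c2) := by linarith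
    refine this.trans ?_
    rw [hdiag, hc1def, hc2def]
    have hne : h ^ 2 ≠ 0 := by positivity
    apply le_of_eq
    field_simp
    ring
  -- eigenvalues of X are bounded by L
  have heig : ∀ i : Fin N, hXsymm.eigenvalues i ≤ L := by
    intro i
    have hev : Module.End.HasEigenvalue (Matrix.toLin' X) (hXsymm.eigenvalues i) := by
      apply Module.End.hasEigenvalue_of_hasEigenvector
        (x := ⇑(hXsymm.eigenvectorBasis i))
      constructor
      · rw [Module.End.mem_eigenspace_iff, Matrix.toLin'_apply]
        exact hXsymm.mulVec_eigenvectorBasis i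
      · intro hzero
        apply hXsymm.eigenvectorBasis.orthonormal.ne_zero i
        ext j
        exact congrFun hzero j
    obtain ⟨k, hk⟩ := eigenvalue_mem_ball hev
    rw [Metric.mem_closedBall, Real.dist_eq] at hk
    have h1 : hXsymm.eigenvalues i - X k k ≤ ∑ j ∈ Finset.univ.erase k, ‖X k j‖ :=
      (le_abs_self _).trans hk
    have h2 : ∑ j ∈ Finset.univ.erase k, ‖X k j‖ = ∑ j ∈ Finset.univ.erase k, |X k j| := rfl
    have := key k
    linarith [h2 ▸ h1]
  -- spectral decomposition
  set U : Matrix (Fin N) (Fin N) ℝ := (Matrix.IsHermitian.eigenvectorUnitary hXsymm : Matrix (Fin N) (Fin N) ℝ)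
    with hUdef
  have hUmem : U ∈ Matrix.unitaryGroup (Fin N) ℝ := (Matrix.IsHermitian.eigenvectorUnitary hXsymm).2
  have hUinv : U⁻¹ = star U := Matrix.inv_eq_right_inv (mem_unitaryGroup_iff.mp hUmem)
  have hUunit : IsUnit U := ⟨Unitary.toUnits ⟨U, hUmem⟩, rfl⟩
  have hofReal : (RCLike.ofReal ∘ hXsymm.eigenvalues : Fin N → ℝ) = hXsymm.eigenvalues := by
    funext j; simp
  have hspec : X = U * Matrix.diagonal hXsymm.eigenvalues * U⁻¹ := by
    rw [hUinv, ← hofReal]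
    exact hXsymm.spectral_theorem
  have hsX : s • X = U * Matrix.diagonal (fun i => s * hXsymm.eigenvalues i) * U⁻¹ := by
    have h0 : (fun i => s * hXsymm.eigenvalues i) = s • hXsymm.eigenvalues := by
      funext i; simp
    conv_lhs => rw [hspec]
    rw [h0, Matrix.diagonal_smul, mul_smul_comm, smul_mul_assoc]
  have hexp : NormedSpace.exp (s • X)
      = U * Matrix.diagonal (fun i => Real.exp (s * hXsymm.eigenvalues i)) * U⁻¹ := by
    rw [hsX, Matrix.exp_conj _ _ hUunit, Matrix.exp_diagonal]
    have : NormedSpace.exp (fun i => s * hXsymm.eigenvalues i)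
        = fun i => Real.exp (s * hXsymm.eigenvalues i) := by
      funext j
      rw [Pi.coe_exp, Real.exp_eq_exp_ℝ]
    rw [this]
  haveI : Nontrivial (Matrix (Fin N) (Fin N) ℝ) := by
    refine ⟨0, 1, fun h01 => ?_⟩
    have := congrFun (congrFun h01 ⟨0, hN⟩) ⟨0, hN⟩
    simp [Matrix.one_apply] at this
  have hUnorm : ‖U‖ = 1 := CStarRing.norm_coe_unitary (⟨U, hUmem⟩ : unitary (Matrix (Fin N) (Fin N) ℝ))
  have hUstarnorm : ‖star U‖ = 1 := by
    rw [Matrix.star_eq_conjTranspose, Matrix.l2_opNorm_conjTranspose]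
    exact hUnorm
  have hDnorm : ‖Matrix.diagonal (fun i => Real.exp (s * hXsymm.eigenvalues i))‖
      ≤ Real.exp (s * L) := by
    apply diag_l2_norm_le _ _ (Real.exp_nonneg _)
    intro i
    rw [abs_of_nonneg (Real.exp_nonneg _)]
    exact Real.exp_le_exp.mpr (mul_le_mul_of_nonneg_left (heig i) hs)
  calc ‖NormedSpace.exp (s • X)‖
      = ‖U * Matrix.diagonal (fun i => Real.exp (s * hXsymm.eigenvalues i)) * U⁻¹‖ := by
        rw [hexp]
    _ ≤ ‖U * Matrix.diagonal (fun i => Real.exp (s * hXsymm.eigenvalues i))‖ * ‖U⁻¹‖ :=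
        Matrix.l2_opNorm_mul _ _
    _ ≤ ‖U‖ * ‖Matrix.diagonal (fun i => Real.exp (s * hXsymm.eigenvalues i))‖ * ‖U⁻¹‖ := by
        have := Matrix.l2_opNorm_mul U (Matrix.diagonal (fun i => Real.exp (s * hXsymm.eigenvalues i)))
        have hUn : (0:ℝ) ≤ ‖U⁻¹‖ := norm_nonneg _
        exact mul_le_mul_of_nonneg_right this hUn
    _ ≤ 1 * Real.exp (s * L) * 1 := by
        rw [hUinv, hUstarnorm, hUnorm]
        have := mul_le_mul_of_nonneg_left hDnorm (zero_le_one (α := ℝ))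
        simpa using hDnorm
    _ = Real.exp (s * L) := by ring
end
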